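/- Let R be a finitely generated commutative unital ℝ-algebra, M = R^n, and f ∈ M an element of the real saturation of a submodule N generated by g₁,…,g_m ∈ M, with coordinates gᵢ = Σⱼ gᵢⱼ eⱼ. Fix k and set, in R^(n−1), g'ᵢ = Σ_{j=2}^n (g_{k1} g_{ij} − g_{kj} g_{i1}) e'_{j−1} and f' = Σ_{j=2}^n (g_{k1} fⱼ − g_{kj} f₁) e'_{j−1}. Then f' belongs to the real saturation (in R^(n−1)) of the submodule N' generated by g'₁,…,g'_m. -/
import Mathlib


/-- The real saturation of a subset of `R^k`, for an `ℝ`-algebra `R`. -/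
def realSat {R : Type*} [CommRing R] [Algebra ℝ R] {k : ℕ} (S : Set (Fin k → R)) :
    Set (Fin k → R) :=
  {h | ∀ (φ : R →ₐ[ℝ] ℝ) (u : Fin k → ℝ),
    (∀ p ∈ S, ∑ j, φ (p j) * u j = 0) → ∑ j, φ (h j) * u j = 0}

/-- If `f` lies in the real saturation of the submodule of `R^n` generated by
`g₁,…,g_m`, then for each fixed `k` the element
`f' = Σ_{j=2}^n (g_{k1} fⱼ − g_{kj} f₁) e'_{j−1}` lies in the real saturation (in
`R^(n−1)`) of the submodule generated by the
`g'ᵢ = Σ_{j=2}^n (g_{k1} g_{ij} − g_{kj} g_{i1}) e'_{j−1}`. -/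
theorem stmt19 {R : Type*} [CommRing R] [Algebra ℝ R] [Algebra.FiniteType ℝ R]
    {n m : ℕ} (g : Fin m → (Fin (n + 1) → R)) (f : Fin (n + 1) → R)
    (hf : f ∈ realSat ((Submodule.span R (Set.range g) : Submodule R (Fin (n + 1) → R)) :
      Set (Fin (n + 1) → R)))
    (k : Fin m) :
    (fun j : Fin n => g k 0 * f j.succ - g k j.succ * f 0) ∈
      realSat ((Submodule.span R (Set.range fun i =>
          (fun j : Fin n => g k 0 * g i j.succ - g k j.succ * g i 0)) :
        Submodule R (Fin n → R)) : Set (Fin n → R)) := by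
  intro φ u hu
  set u' : Fin (n + 1) → ℝ :=
    Fin.cases (-∑ j, φ (g k j.succ) * u j) (fun j => φ (g k 0) * u j) with hu'
  have key : ∀ p : Fin (n + 1) → R,
      ∑ j, φ (p j) * u' j
        = ∑ j : Fin n, φ (g k 0 * p j.succ - g k j.succ * p 0) * u j := by
    intro p
    have h1 : ∑ j : Fin n, φ (g k 0 * p j.succ - g k j.succ * p 0) * u j
        = ∑ j : Fin n, (φ (p j.succ) * (φ (g k 0) * u j)
            - φ (p 0) * (φ (g k j.succ) * u j)) := by
      refine Finset.sum_congr rfl fun j _ => ?_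
      simp only [map_sub, map_mul]; ring
    rw [Fin.sum_univ_succ, h1, Finset.sum_sub_distrib]
    simp only [hu', Fin.cases_zero, Fin.cases_succ]
    rw [mul_neg, Finset.mul_sum]
    exact neg_add_eq_sub _ _
  have hg' : ∀ i, ∑ j, φ (g k 0 * g i j.succ - g k j.succ * g i 0) * u j = 0 := fun i =>
    hu _ (Submodule.subset_span ⟨i, rfl⟩)
  have hspan : ∀ p ∈ Submodule.span R (Set.range g), ∑ j, φ (p j) * u' j = 0 := by
    intro p hp
    induction hp using Submodule.span_induction with
    | mem x hx => obtain ⟨i, rfl⟩ := hx; rw [key]; exact hg' i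
    | zero => simp
    | add x y _ _ hx hy =>
        simp only [Pi.add_apply, map_add, add_mul, Finset.sum_add_distrib, hx, hy, add_zero]
    | smul r x _ hx =>
        simp only [Pi.smul_apply, smul_eq_mul, map_mul, mul_assoc, ← Finset.mul_sum, hx,
          mul_zero]
  have h := hf φ u' hspan
  rw [key f] at h
  simpa using h
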